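/- arXiv:1310.7656 — 5 statements merged into one kernel-verified Lean document; each statement's English description precedes it below -/
import Mathlib

section
/- Let Λ be a finitely aligned k-graph, let c be a T-valued 2-cocycle on Λ, and let t be a Toeplitz–Cuntz–Krieger (Λ,c)-family in a C*-algebra A. For ν, η ∈ Λ, write each λ ∈ MCE(ν,η) as λ = να_λ = ηβ_λ (these factorisations exist and are unique by the factorisation property). Then t_ν* t_η = Σ_{λ ∈ MCE(ν,η)} conj(c(ν,α_λ)) c(η,β_λ) t_{α_λ} t_{β_λ}*. -/
open scoped BigOperators

/-- A `k`-graph: a countable category with degree functor `d : Λ → ℕ^k`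
satisfying the factorisation property.  Composition `comp μ ν` is only
meaningful when `s μ = r ν`. -/
structure KGraph (k : ℕ) where
  Path : Type
  countable : Countable Path
  r : Path → Path
  s : Path → Path
  d : Path → (Fin k → ℕ)
  comp : Path → Path → Path
  d_r : ∀ l, d (r l) = 0
  d_s : ∀ l, d (s l) = 0
  r_of_vertex : ∀ v, d v = 0 → r v = v
  s_of_vertex : ∀ v, d v = 0 → s v = v
  id_comp : ∀ l, comp (r l) l = l
  comp_id : ∀ l, comp l (s l) = l
  r_comp : ∀ μ ν, s μ = r ν → r (comp μ ν) = r μ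
  s_comp : ∀ μ ν, s μ = r ν → s (comp μ ν) = s ν
  d_comp : ∀ μ ν, s μ = r ν → d (comp μ ν) = d μ + d ν
  comp_assoc : ∀ l μ ν, s l = r μ → s μ = r ν →
    comp (comp l μ) ν = comp l (comp μ ν)
  factor : ∀ (l : Path) (m n : Fin k → ℕ), d l = m + n →
    ∃! p : Path × Path, d p.1 = m ∧ d p.2 = n ∧ s p.1 = r p.2 ∧ comp p.1 p.2 = l

namespace KGraph

variable {k : ℕ} (G : KGraph k)

def IsVertex (v : G.Path) : Prop := G.d v = 0

/-- `MCE μ ν = μΛ ∩ νΛ ∩ Λ^{d μ ⊔ d ν}`. -/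
def MCE (μ ν : G.Path) : Set G.Path :=
  {l | G.d l = G.d μ ⊔ G.d ν ∧
      (∃ α, G.s μ = G.r α ∧ G.comp μ α = l) ∧
      (∃ β, G.s ν = G.r β ∧ G.comp ν β = l)}

def FinitelyAligned : Prop := ∀ μ ν : G.Path, (G.MCE μ ν).Finite

/-- `Ext(μ; E) = ⋃_{ν ∈ E} {α : μα ∈ MCE(μ,ν)}`. -/
def Ext (μ : G.Path) (E : Set G.Path) : Set G.Path :=
  {α | G.s μ = G.r α ∧ ∃ ν ∈ E, G.comp μ α ∈ G.MCE μ ν}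

/-- `Ext` computed relative to a sub-`k`-graph with path set `W`. -/
def ExtIn (W : Set G.Path) (μ : G.Path) (E : Set G.Path) : Set G.Path :=
  {α | G.s μ = G.r α ∧ ∃ ν ∈ E, G.comp μ α ∈ G.MCE μ ν ∩ W}

/-- `E` is exhaustive at `v` relative to the sub-`k`-graph with path set `W`. -/
def ExhaustiveIn (W : Set G.Path) (v : G.Path) (E : Set G.Path) : Prop :=
  ∀ l ∈ W, G.r l = v → ∃ μ ∈ E, (G.MCE l μ ∩ W).Nonempty

def Exhaustive (v : G.Path) (E : Set G.Path) : Prop := G.ExhaustiveIn Set.univ v E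

/-- Membership in `FE` of the sub-`k`-graph with path set `W`. -/
def IsFEIn (W : Set G.Path) (E : Set G.Path) : Prop :=
  E.Finite ∧ E ⊆ W ∧ (∀ μ ∈ E, ¬ G.IsVertex μ) ∧
    ∃ v, G.IsVertex v ∧ (∀ μ ∈ E, G.r μ = v) ∧ G.ExhaustiveIn W v E

def IsFE (E : Set G.Path) : Prop := G.IsFEIn Set.univ E

/-- A satiated collection of finite exhaustive sets, relative to the sub-`k`-graph `W`. -/
def SatiatedIn (W : Set G.Path) (Ε : Set (Set G.Path)) : Prop :=
  (∀ E ∈ Ε, G.IsFEIn W E) ∧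
  ∀ F ∈ Ε, ∀ v, G.IsVertex v → (∀ μ ∈ F, G.r μ = v) →
    ((∀ l ∈ W, G.r l = v → l ≠ v → insert l F ∈ Ε) ∧
     (∀ l ∈ W, G.r l = v →
        (¬ ∃ μ ∈ F, ∃ μ', G.s μ = G.r μ' ∧ G.comp μ μ' = l) →
        G.ExtIn W l F ∈ Ε) ∧
     (∀ lam lam', lam ∈ F → G.s lam = G.r lam' → G.comp lam lam' ∈ F →
        lam' ≠ G.s lam → F \ {G.comp lam lam'} ∈ Ε) ∧
     (∀ lam ∈ F, ∀ Gs ∈ Ε, (∀ μ ∈ Gs, G.r μ = G.s lam) →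
        ((F \ {lam}) ∪ (G.comp lam) '' Gs) ∈ Ε))

def Satiated (Ε : Set (Set G.Path)) : Prop := G.SatiatedIn Set.univ Ε

end KGraph

/-- A normalised `𝕋`-valued categorical `2`-cocycle on a `k`-graph, with the
circle realised as the norm-one complex numbers. -/
structure KGraph.Cocycle {k : ℕ} (G : KGraph k) where
  c : G.Path → G.Path → ℂ
  norm_one : ∀ μ ν, G.s μ = G.r ν → ‖c μ ν‖ = 1
  cocycle : ∀ l μ ν, G.s l = G.r μ → G.s μ = G.r ν →
    c l μ * c (G.comp l μ) ν = c μ ν * c l (G.comp μ ν)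
  left_id : ∀ l, c (G.r l) l = 1
  right_id : ∀ l, c l (G.s l) = 1

namespace KGraph

variable {k : ℕ} (G : KGraph k)

section CStar

variable {A : Type*} [NonUnitalNormedRing A] [StarRing A] [CStarRing A]
  [NormedSpace ℂ A] [IsScalarTower ℂ A A] [SMulCommClass ℂ A A]
  [StarModule ℂ A] [CompleteSpace A]

/-- Toeplitz–Cuntz–Krieger `(Λ, c)`-family. -/
def IsTCK (σ : G.Cocycle) (t : G.Path → A) : Prop :=
  (∀ v, G.IsVertex v → star (t v) = t v ∧ t v * t v = t v) ∧
  (∀ v w, G.IsVertex v → G.IsVertex w → v ≠ w → t v * t w = 0) ∧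
  (∀ μ ν, G.s μ = G.r ν → t μ * t ν = σ.c μ ν • t (G.comp μ ν)) ∧
  (∀ l, star (t l) * t l = t (G.s l)) ∧
  (∀ μ ν (F : Finset G.Path), (F : Set G.Path) = G.MCE μ ν →
    (t μ * star (t μ)) * (t ν * star (t ν)) = ∑ l ∈ F, t l * star (t l))

open scoped Classical in
/-- `Δ(t)^F = ∏_{l ∈ F} (q_v - q_l)`; the factors commute for a TCK family, so the
`noncommProd` below is the product from the paper.  The product is computed in the
unitization (with a harmless prefactor `q_v`, which acts as the identity on each
factor for a TCK family with `F ⊆ vΛ`), so that the empty product is `q_v`. -/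
noncomputable def Delta (t : G.Path → A) (v : G.Path) (F : Finset G.Path) : A :=
  if h : (F : Set G.Path).Pairwise (Function.onFun Commute fun l =>
      ((t v * star (t v) - t l * star (t l) : A) : Unitization ℂ A))
  then (((t v * star (t v) : A) : Unitization ℂ A) *
      F.noncommProd (fun l => ((t v * star (t v) - t l * star (t l) : A) : Unitization ℂ A)) h).snd
  else 0

/-- Relative Cuntz–Krieger `(Λ, c; Ε)`-family. -/
def IsRelCK (σ : G.Cocycle) (Ε : Set (Set G.Path)) (t : G.Path → A) : Prop :=
  G.IsTCK σ t ∧ ∀ (F : Finset G.Path) (v : G.Path), (F : Set G.Path) ∈ Ε →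
    G.IsVertex v → (∀ μ ∈ F, G.r μ = v) → G.Delta t v F = 0

/-- Cuntz–Krieger `(Λ, c)`-family (finitely aligned case). -/
def IsCK (σ : G.Cocycle) (t : G.Path → A) : Prop :=
  G.IsRelCK σ {E | G.IsFE E} t

/-- The `C*`-subalgebra of `A` generated by a family `t`, as a subset of `A`. -/
def cstarOf (t : G.Path → A) : Set A :=
  closure (↑(NonUnitalStarAlgebra.adjoin ℂ (Set.range t)) : Set A)

end CStar

/-- Row-finite with no sources: every `vΛ^n` is finite and nonempty. -/
def RowFiniteNoSources : Prop :=
  ∀ v, G.IsVertex v → ∀ n : Fin k → ℕ,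
    {l | G.r l = v ∧ G.d l = n}.Finite ∧ {l | G.r l = v ∧ G.d l = n}.Nonempty

section CStar2

variable {A : Type*} [NonUnitalNormedRing A] [StarRing A] [CStarRing A]
  [NormedSpace ℂ A] [IsScalarTower ℂ A A] [SMulCommClass ℂ A A]
  [StarModule ℂ A] [CompleteSpace A]

/-- Cuntz–Krieger family, row-finite no sources formulation:
`∑_{λ ∈ vΛ^n} t_λ t_λ* = t_v`. -/
def IsCKrf (σ : G.Cocycle) (t : G.Path → A) : Prop :=
  G.IsTCK σ t ∧ ∀ v (n : Fin k → ℕ) (F : Finset G.Path), G.IsVertex v →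
    (F : Set G.Path) = {l | G.r l = v ∧ G.d l = n} →
    ∑ l ∈ F, t l * star (t l) = t v

end CStar2

/-- A filter in a `k`-graph. -/
def IsFilter (S : Set G.Path) : Prop :=
  (∀ l, (∃ α, G.s l = G.r α ∧ G.comp l α ∈ S) → l ∈ S) ∧
  (∀ μ ∈ S, ∀ ν ∈ S, (G.MCE μ ν ∩ S).Nonempty)

/-- An ultrafilter: a filter meeting every `Λ^n`. -/
def IsUltrafilter (S : Set G.Path) : Prop :=
  G.IsFilter S ∧ ∀ n : Fin k → ℕ, ∃ l ∈ S, G.d l = n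

/-- `ℓ_μ(S) = {ν : νΛ ∩ μS ≠ ∅}`. -/
def lmap (μ : G.Path) (S : Set G.Path) : Set G.Path :=
  {ν | ∃ τ ∈ S, G.s μ = G.r τ ∧ ∃ α, G.s ν = G.r α ∧ G.comp ν α = G.comp μ τ}

/-- `μ ∼ ν`: `ℓ_μ(S) = ℓ_ν(S)` for every ultrafilter `S` with `r(S) = s(μ)`. -/
def PEquiv (μ ν : G.Path) : Prop :=
  ∀ S, G.IsUltrafilter S → G.s μ ∈ S → G.lmap μ S = G.lmap ν S

/-- `d` with values in `ℤ^k`. -/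
def dZ (l : G.Path) : Fin k → ℤ := fun i => (G.d l i : ℤ)

/-- `Per(Λ) ≤ ℤ^k`, generated by `{d(μ) - d(ν) : μ ∼ ν}`. -/
def PerGroup : AddSubgroup (Fin k → ℤ) :=
  AddSubgroup.closure
    {m | ∃ μ ν, G.s μ = G.s ν ∧ G.PEquiv μ ν ∧ m = G.dZ μ - G.dZ ν}

/-- The hereditary set `H_Per`. -/
def HPer : Set G.Path :=
  {v | G.IsVertex v ∧ ∀ m n : Fin k → ℕ,
    ((fun i => (m i : ℤ)) - fun i => (n i : ℤ)) ∈ G.PerGroup →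
    ∀ l, G.r l = v → G.d l = m →
      ∃ μ, G.r μ = v ∧ G.d μ = n ∧ G.s μ = G.s l ∧ G.PEquiv l μ}

end KGraph

/-! Each generator `t_μ` is a partial isometry, so `t_ν* t_η = t_ν* (q_ν q_η) t_η`; expanding
`q_ν q_η` by (TCK4) turns this into `∑_λ (t_ν* t_λ)(t_λ* t_η)`, and for `λ = να` the factor
`t_ν* t_λ` collapses to `conj(c(ν,α)) t_α` by (TCK2), (TCK3) and `|c(ν,α)| = 1`. -/

namespace KGraph

variable {k : ℕ} {G : KGraph k}

lemma Cocycle.conj_mul_self (σ : G.Cocycle) {μ ν : G.Path} (h : G.s μ = G.r ν) :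
    starRingEnd ℂ (σ.c μ ν) * σ.c μ ν = 1 := by
  rw [Complex.conj_mul', σ.norm_one μ ν h]
  norm_num

namespace IsTCK

variable {σ : G.Cocycle} {A : Type*} [NonUnitalNormedRing A] [StarRing A] [NormedSpace ℂ A]
  {t : G.Path → A}

lemma range_mul (ht : G.IsTCK σ t) (μ : G.Path) : t (G.r μ) * t μ = t μ := by
  rw [ht.2.2.1 _ μ (G.s_of_vertex _ (G.d_r μ)), σ.left_id, G.id_comp, one_smul]

lemma mul_source (ht : G.IsTCK σ t) (μ : G.Path) : t μ * t (G.s μ) = t μ := by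
  rw [ht.2.2.1 μ _ (G.r_of_vertex _ (G.d_s μ)).symm, σ.right_id, G.comp_id, one_smul]

lemma mul_star_mul_self (ht : G.IsTCK σ t) (μ : G.Path) : t μ * star (t μ) * t μ = t μ := by
  rw [mul_assoc, ht.2.2.2.1 μ, ht.mul_source]

lemma star_mul_mul_star (ht : G.IsTCK σ t) (μ : G.Path) :
    star (t μ) * t μ * star (t μ) = star (t μ) := by
  simpa only [star_mul, star_star, mul_assoc] using congrArg star (ht.mul_star_mul_self μ)

lemma star_mul_of_comp_eq [SMulCommClass ℂ A A] (ht : G.IsTCK σ t) {μ α l : G.Path}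
    (h : G.s μ = G.r α) (hl : G.comp μ α = l) :
    star (t μ) * t l = starRingEnd ℂ (σ.c μ α) • t α := by
  calc star (t μ) * t l
      = (starRingEnd ℂ (σ.c μ α) * σ.c μ α) • (star (t μ) * t l) := by
        rw [σ.conj_mul_self h, one_smul]
    _ = starRingEnd ℂ (σ.c μ α) • (star (t μ) * (t μ * t α)) := by
        rw [mul_smul, ← mul_smul_comm, ht.2.2.1 μ α h, hl]
    _ = starRingEnd ℂ (σ.c μ α) • t α := by
        rw [← mul_assoc, ht.2.2.2.1 μ, h, ht.range_mul]

lemma star_mul_of_comp_eq' [SMulCommClass ℂ A A] [StarModule ℂ A] (ht : G.IsTCK σ t)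
    {μ α l : G.Path} (h : G.s μ = G.r α) (hl : G.comp μ α = l) :
    star (t l) * t μ = σ.c μ α • star (t α) := by
  simpa only [star_mul, star_star, star_smul, Complex.star_def, Complex.conj_conj]
    using congrArg star (ht.star_mul_of_comp_eq h hl)

end IsTCK

end KGraph

theorem stmt1_general {k : ℕ} (G : KGraph k) (σ : G.Cocycle)
    {A : Type*} [NonUnitalNormedRing A] [StarRing A]
    [NormedSpace ℂ A] [IsScalarTower ℂ A A] [SMulCommClass ℂ A A]
    [StarModule ℂ A]
    (t : G.Path → A) (ht : G.IsTCK σ t)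
    (ν η : G.Path) (F : Finset G.Path) (hF : (F : Set G.Path) = G.MCE ν η)
    (α β : G.Path → G.Path)
    (hα : ∀ l ∈ F, G.s ν = G.r (α l) ∧ G.comp ν (α l) = l)
    (hβ : ∀ l ∈ F, G.s η = G.r (β l) ∧ G.comp η (β l) = l) :
    star (t ν) * t η =
      ∑ l ∈ F, (starRingEnd ℂ (σ.c ν (α l)) * σ.c η (β l)) •
        (t (α l) * star (t (β l))) := by
  calc star (t ν) * t η
      = (star (t ν) * t ν * star (t ν)) * (t η * star (t η) * t η) := by
        rw [ht.star_mul_mul_star, ht.mul_star_mul_self]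
    _ = star (t ν) * ((t ν * star (t ν)) * (t η * star (t η))) * t η := by
        simp only [mul_assoc]
    _ = ∑ l ∈ F, (star (t ν) * t l) * (star (t l) * t η) := by
        rw [ht.2.2.2.2 ν η F hF, Finset.mul_sum, Finset.sum_mul]
        simp only [mul_assoc]
    _ = _ := Finset.sum_congr rfl fun l hl => by
        rw [ht.star_mul_of_comp_eq (hα l hl).1 (hα l hl).2,
          ht.star_mul_of_comp_eq' (hβ l hl).1 (hβ l hl).2, smul_mul_smul_comm]

/-- `t_ν* t_η = Σ_{να=ηβ ∈ MCE(ν,η)} conj(c(ν,α)) c(η,β) t_α t_β*`. -/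
theorem stmt1 {k : ℕ} (G : KGraph k) (hFA : G.FinitelyAligned) (σ : G.Cocycle)
    {A : Type*} [NonUnitalNormedRing A] [StarRing A] [CStarRing A]
    [NormedSpace ℂ A] [IsScalarTower ℂ A A] [SMulCommClass ℂ A A]
    [StarModule ℂ A] [CompleteSpace A]
    (t : G.Path → A) (ht : G.IsTCK σ t)
    (ν η : G.Path) (F : Finset G.Path) (hF : (F : Set G.Path) = G.MCE ν η)
    (α β : G.Path → G.Path)
    (hα : ∀ l ∈ F, G.s ν = G.r (α l) ∧ G.comp ν (α l) = l)
    (hβ : ∀ l ∈ F, G.s η = G.r (β l) ∧ G.comp η (β l) = l) :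
    star (t ν) * t η =
      ∑ l ∈ F, (starRingEnd ℂ (σ.c ν (α l)) * σ.c η (β l)) •
        (t (α l) * star (t (β l))) :=
  stmt1_general G σ t ht ν η F hF α β hα hβ
end

section
/- Let Λ be a finitely aligned k-graph, let c be a T-valued 2-cocycle on Λ, and let t be a Toeplitz–Cuntz–Krieger (Λ,c)-family in a C*-algebra A. If v ∈ Λ^0, E ⊆ vΛ is finite and nonempty, and μ ∈ vΛ, then Δ(t)^E t_μ = t_μ Δ(t)^{Ext(μ;E)} (note Ext(μ;E) is a finite subset of s(μ)Λ since Λ is finitely aligned). -/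
open scoped BigOperators

/-!
For a single `ν ∈ E`, (TCK4) gives `q_ν t_μ = q_ν q_μ t_μ = t_μ ∑_{α ∈ Ext(μ;{ν})} q_α`, and the
`q_α` occurring here are mutually orthogonal subprojections of `t_{s(μ)}`, because all these `α`
have the same degree `d(μ) ∨ d(ν) - d(μ)`. Hence
`(q_v - q_ν) t_μ = t_μ (t_{s(μ)} - ∑ q_α) = t_μ t_{s(μ)} ∏_{α ∈ Ext(μ;{ν})} (t_{s(μ)} - q_α)`.
By finite alignment all the factors `q_w - q_λ` commute, and those at `w = s(μ)` are idempotent,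
so pushing `t_μ` through `Δ(t)^E` one factor at a time produces the product over
`⋃_{ν ∈ E} Ext(μ;{ν}) = Ext(μ;E)`, with repeated factors absorbed. The computation takes place in
the unitization, where `Δ` is defined.
-/

section NoncommProd

variable {M ι κ : Type*} [Monoid M]

theorem Finset.noncommProd_mul_noncommProd_of_isIdempotentElem [DecidableEq ι] {f : ι → M}
    (hf : ∀ a b, Commute (f a) (f b)) (S₁ S₂ : Finset ι)
    (hidem : ∀ a ∈ S₁, IsIdempotentElem (f a)) :
    S₁.noncommProd f (Set.pairwise_of_forall _ _ hf) * S₂.noncommProd f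
        (Set.pairwise_of_forall _ _ hf) =
      (S₁ ∪ S₂).noncommProd f (Set.pairwise_of_forall _ _ hf) := by
  induction S₁ using Finset.induction_on with
  | empty => rw [Finset.noncommProd_empty, one_mul, Finset.empty_union]
  | @insert a S₁ ha ih =>
    rw [Finset.noncommProd_insert_of_notMem _ _ _ _ ha, mul_assoc,
      ih fun b hb => hidem b (Finset.mem_insert_of_mem hb), Finset.insert_union]
    by_cases haS : a ∈ S₁ ∪ S₂
    · rw [Finset.insert_eq_self.mpr haS, ← Finset.mul_noncommProd_erase _ haS, ← mul_assoc,
        (hidem a (Finset.mem_insert_self a S₁)).eq]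
    · rw [Finset.noncommProd_insert_of_notMem _ _ _ _ haS]

theorem Finset.mul_noncommProd_mul_eq_mul_noncommProd_biUnion [DecidableEq κ] {f : ι → M}
    {g : κ → M} (hf : ∀ a b, Commute (f a) (f b)) (hg : ∀ a b, Commute (g a) (g b))
    {e p x : M} (X : ι → Finset κ) (S : Finset ι) (hef : ∀ a ∈ S, Commute e (f a))
    (hex : e * x = x * p) (hp : IsIdempotentElem p)
    (hpg : ∀ b ∈ S.biUnion X, Commute p (g b))
    (hg_idem : ∀ b ∈ S.biUnion X, IsIdempotentElem (g b))
    (hfx : ∀ a ∈ S, f a * x = x * (p * (X a).noncommProd g (Set.pairwise_of_forall _ _ hg))) :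
    e * S.noncommProd f (Set.pairwise_of_forall _ _ hf) * x =
      x * (p * (S.biUnion X).noncommProd g (Set.pairwise_of_forall _ _ hg)) := by
  classical
  induction S using Finset.induction_on with
  | empty => rw [Finset.noncommProd_empty, Finset.biUnion_empty, Finset.noncommProd_empty,
      mul_one, mul_one, hex]
  | @insert a S ha ih =>
    simp only [Finset.mem_insert, forall_eq_or_imp, Finset.biUnion_insert, Finset.mem_union]
      at hef hfx hpg hg_idem ⊢
    have hpXa : Commute p ((X a).noncommProd g (Set.pairwise_of_forall _ _ hg)) :=
      Finset.noncommProd_commute _ _ _ _ fun b hb => hpg b (Or.inl hb)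
    calc e * (insert a S).noncommProd f _ * x = f a * (e * S.noncommProd f _ * x) := by
          rw [Finset.noncommProd_insert_of_notMem _ _ _ _ ha, ← mul_assoc, hef.1.eq]
          simp only [mul_assoc]
      _ = x * (p * (X a).noncommProd g _) * (p * (S.biUnion X).noncommProd g _) := by
          rw [ih hef.2 (fun b hb => hpg b (Or.inr hb)) (fun b hb => hg_idem b (Or.inr hb)) hfx.2,
            ← mul_assoc, hfx.1]
      _ = x * (p * (X a ∪ S.biUnion X).noncommProd g _) := by
          rw [mul_assoc x, ← Finset.noncommProd_mul_noncommProd_of_isIdempotentElem hg _ _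
              fun b hb => hg_idem b (Or.inl hb), hpXa.symm.mul_mul_mul_comm, hp.eq]

theorem Finset.mul_noncommProd_sub_eq_sub_sum {R : Type*} [Ring R] {p : R} {q : ι → R}
    (hc : ∀ a b, Commute (p - q a) (p - q b)) (hp : IsIdempotentElem p) (S : Finset ι)
    (hpq : ∀ a ∈ S, p * q a = q a) (hqp : ∀ a ∈ S, q a * p = q a)
    (horth : (S : Set ι).Pairwise fun a b => q a * q b = 0) :
    p * S.noncommProd (fun a => p - q a) (Set.pairwise_of_forall _ _ hc) = p - ∑ a ∈ S, q a := by
  classical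
  induction S using Finset.induction_on with
  | empty => rw [Finset.noncommProd_empty, Finset.sum_empty, mul_one, sub_zero]
  | @insert a S ha ih =>
    simp only [Finset.mem_insert, forall_eq_or_imp] at hpq hqp
    have hqa : q a * S.noncommProd (fun a => p - q a) (Set.pairwise_of_forall _ _ hc) = q a :=
      Finset.noncommProd_induction _ _ _ (fun y => q a * y = q a)
        (fun y z hy hz => by rw [← mul_assoc, hy, hz]) (mul_one _) fun b hb => by
          rw [mul_sub, hqp.1, horth (Finset.mem_insert_self a S) (Finset.mem_insert_of_mem hb)
            (by rintro rfl; exact ha hb), sub_zero]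
    rw [Finset.noncommProd_insert_of_notMem _ _ _ _ ha, ← mul_assoc, mul_sub, hp.eq, hpq.1,
      sub_mul, ih hpq.2 hqp.2 (horth.mono (by simp)), hqa, Finset.sum_insert ha]
    abel

end NoncommProd

namespace KGraph

variable {k : ℕ} {G : KGraph k}

theorem MCE_comm (μ ν : G.Path) : G.MCE μ ν = G.MCE ν μ := by
  ext l
  constructor <;> rintro ⟨hd, hμ, hν⟩ <;> exact ⟨hd.trans (sup_comm _ _), hν, hμ⟩

theorem comp_left_cancel {μ α β : G.Path} (hα : G.s μ = G.r α) (hβ : G.s μ = G.r β)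
    (hd : G.d α = G.d β) (h : G.comp μ α = G.comp μ β) : α = β := by
  obtain ⟨_, _, huniq⟩ := G.factor (G.comp μ α) (G.d μ) (G.d α) (G.d_comp μ α hα)
  exact congrArg Prod.snd
    ((huniq (μ, α) ⟨rfl, rfl, hα, rfl⟩).trans (huniq (μ, β) ⟨rfl, hd.symm, hβ, h.symm⟩).symm)

theorem comp_eq_self_of_d_comp_eq {α γ : G.Path} (h : G.s α = G.r γ)
    (hd : G.d (G.comp α γ) = G.d α) : G.comp α γ = α := by
  have hγ : G.d γ = 0 := left_eq_add.mp (hd.symm.trans (G.d_comp α γ h))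
  rw [← G.r_of_vertex γ hγ, ← h, G.comp_id]

theorem MCE_eq_empty_of_d_eq {α β : G.Path} (hd : G.d α = G.d β) (hne : α ≠ β) :
    G.MCE α β = ∅ := by
  refine Set.eq_empty_of_forall_notMem ?_
  rintro ρ ⟨hdρ, ⟨γ, hγ, rfl⟩, ⟨δ, hδ, hρ⟩⟩
  refine hne ((comp_eq_self_of_d_comp_eq hγ ?_).symm.trans
    (hρ.symm.trans (comp_eq_self_of_d_comp_eq hδ ?_)))
  · rw [hdρ, hd, sup_idem]
  · rw [hρ, hdρ, hd, sup_idem]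

theorem d_eq_of_mem_Ext_singleton {μ ν α β : G.Path} (hα : α ∈ G.Ext μ {ν})
    (hβ : β ∈ G.Ext μ {ν}) : G.d α = G.d β := by
  obtain ⟨hrα, _, rfl, hdα, -⟩ := hα
  obtain ⟨hrβ, _, rfl, hdβ, -⟩ := hβ
  rw [G.d_comp μ α hrα] at hdα
  rw [G.d_comp μ β hrβ] at hdβ
  exact add_left_cancel (hdα.trans hdβ.symm)

theorem injOn_comp_Ext_singleton (μ ν : G.Path) : Set.InjOn (G.comp μ) (G.Ext μ {ν}) :=
  fun _ hα _ hβ => comp_left_cancel hα.1 hβ.1 (d_eq_of_mem_Ext_singleton hα hβ)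

theorem Ext_mono (μ : G.Path) {E F : Set G.Path} (h : E ⊆ F) : G.Ext μ E ⊆ G.Ext μ F :=
  fun _ ⟨hα, ν, hν, hmce⟩ => ⟨hα, ν, h hν, hmce⟩

theorem image_comp_Ext_singleton (μ ν : G.Path) : G.comp μ '' G.Ext μ {ν} = G.MCE μ ν := by
  ext l
  constructor
  · rintro ⟨α, ⟨-, _, rfl, hα⟩, rfl⟩
    exact hα
  · intro hl
    obtain ⟨α, hα, rfl⟩ := hl.2.1
    exact ⟨α, ⟨hα, ν, rfl, hl⟩, rfl⟩

theorem exists_biUnion_eq_of_coe_eq_Ext [DecidableEq G.Path] {μ : G.Path}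
    {E Fext : Finset G.Path}
    (hFext : (Fext : Set G.Path) = G.Ext μ E) :
    ∃ X : G.Path → Finset G.Path,
      (∀ ν ∈ E, (X ν : Set G.Path) = G.Ext μ {ν}) ∧ E.biUnion X = Fext := by
  classical
  have hmem : ∀ α, α ∈ Fext ↔ α ∈ G.Ext μ E := fun α => by rw [← hFext, Finset.mem_coe]
  refine ⟨fun ν => Fext.filter (· ∈ G.Ext μ {ν}), fun ν hν => ?_, ?_⟩
  · ext α
    simp only [Finset.coe_filter, hmem, Set.mem_ofPred_eq]
    exact and_iff_right_of_imp (Ext_mono μ (by simpa using hν) ·)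
  · ext α
    simp only [Finset.mem_biUnion, Finset.mem_filter, hmem]
    refine ⟨fun ⟨_, _, hα, _⟩ => hα, fun hα => ?_⟩
    obtain ⟨hr, ν, hν, h⟩ := hα
    exact ⟨ν, hν, ⟨hr, ν, hν, h⟩, hr, ν, rfl, h⟩

/-- The paper's `q_λ`. -/
def rangeProj {A : Type*} [Mul A] [Star A] (t : G.Path → A) (l : G.Path) : A :=
  t l * star (t l)

theorem isSelfAdjoint_rangeProj {A : Type*} [Mul A] [StarMul A] (t : G.Path → A) (l : G.Path) :
    IsSelfAdjoint (rangeProj t l) :=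
  IsSelfAdjoint.mul_star_self (t l)

variable {A : Type*} [NonUnitalNormedRing A] [StarRing A] [NormedSpace ℂ A]
  {σ : G.Cocycle} {t : G.Path → A}

namespace IsTCK

theorem star_vertex (ht : G.IsTCK σ t) {w : G.Path} (hw : G.IsVertex w) : star (t w) = t w :=
  (ht.1 w hw).1

theorem isIdempotentElem_vertex (ht : G.IsTCK σ t) {w : G.Path} (hw : G.IsVertex w) :
    IsIdempotentElem (t w) :=
  (ht.1 w hw).2

theorem r_mul (ht : G.IsTCK σ t) (a : G.Path) : t (G.r a) * t a = t a := by
  rw [ht.2.2.1 _ _ (G.s_of_vertex _ (G.d_r a)), σ.left_id, G.id_comp, one_smul]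

theorem mul_s (ht : G.IsTCK σ t) (a : G.Path) : t a * t (G.s a) = t a := by
  rw [ht.2.2.1 _ _ (G.r_of_vertex _ (G.d_s a)).symm, σ.right_id, G.comp_id, one_smul]

theorem rangeProj_mul (ht : G.IsTCK σ t) (a : G.Path) : rangeProj t a * t a = t a := by
  rw [rangeProj, mul_assoc, ht.2.2.2.1, ht.mul_s]

theorem isIdempotentElem_rangeProj (ht : G.IsTCK σ t) (a : G.Path) :
    IsIdempotentElem (rangeProj t a) := by
  change rangeProj t a * (t a * star (t a)) = rangeProj t a
  rw [← mul_assoc, ht.rangeProj_mul, rangeProj]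

theorem vertex_mul_rangeProj (ht : G.IsTCK σ t) {w a : G.Path} (h : G.r a = w) :
    t w * rangeProj t a = rangeProj t a := by
  rw [rangeProj, ← mul_assoc, ← h, ht.r_mul]

theorem vertex_mul_rangeProj_of_ne (ht : G.IsTCK σ t) {w a : G.Path} (hw : G.IsVertex w)
    (h : G.r a ≠ w) : t w * rangeProj t a = 0 := by
  rw [rangeProj, ← mul_assoc, ← ht.r_mul a, ← mul_assoc,
    ht.2.1 w _ hw (G.d_r a) (Ne.symm h), zero_mul, zero_mul]

theorem rangeProj_mul_vertex_eq_star (ht : G.IsTCK σ t) {w : G.Path} (hw : G.IsVertex w)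
    (a : G.Path) : rangeProj t a * t w = star (t w * rangeProj t a) := by
  rw [star_mul, ht.star_vertex hw, (isSelfAdjoint_rangeProj t a).star_eq]

theorem rangeProj_mul_vertex (ht : G.IsTCK σ t) {w a : G.Path} (hw : G.IsVertex w)
    (h : G.r a = w) : rangeProj t a * t w = rangeProj t a := by
  rw [ht.rangeProj_mul_vertex_eq_star hw, ht.vertex_mul_rangeProj h,
    (isSelfAdjoint_rangeProj t a).star_eq]

theorem commute_vertex_rangeProj (ht : G.IsTCK σ t) {w : G.Path} (hw : G.IsVertex w)
    (a : G.Path) : Commute (t w) (rangeProj t a) := by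
  by_cases h : G.r a = w
  · exact (ht.vertex_mul_rangeProj h).trans (ht.rangeProj_mul_vertex hw h).symm
  · rw [Commute, SemiconjBy, ht.rangeProj_mul_vertex_eq_star hw,
      ht.vertex_mul_rangeProj_of_ne hw h, star_zero]

theorem rangeProj_mul_rangeProj_eq_zero (ht : G.IsTCK σ t) {a b : G.Path}
    (h : G.MCE a b = ∅) : rangeProj t a * rangeProj t b = 0 :=
  (ht.2.2.2.2 a b ∅ (by rw [Finset.coe_empty, h])).trans Finset.sum_empty

theorem rangeProj_mul_rangeProj_eq_zero_of_mem_Ext_singleton (ht : G.IsTCK σ t)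
    {μ ν α β : G.Path} (hα : α ∈ G.Ext μ {ν}) (hβ : β ∈ G.Ext μ {ν}) (hne : α ≠ β) :
    rangeProj t α * rangeProj t β = 0 :=
  ht.rangeProj_mul_rangeProj_eq_zero
    (MCE_eq_empty_of_d_eq (d_eq_of_mem_Ext_singleton hα hβ) hne)

theorem commute_rangeProj (ht : G.IsTCK σ t) (hFA : G.FinitelyAligned) (a b : G.Path) :
    Commute (rangeProj t a) (rangeProj t b) :=
  (ht.2.2.2.2 a b _ (hFA a b).coe_toFinset).trans
    (ht.2.2.2.2 b a _ ((hFA a b).coe_toFinset.trans (MCE_comm a b))).symm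

theorem commute_inr_vertex_sub_rangeProj (ht : G.IsTCK σ t) (hFA : G.FinitelyAligned)
    {w : G.Path} (hw : G.IsVertex w) (a b : G.Path) :
    Commute ((t w : Unitization ℂ A) - rangeProj t a)
      ((t w : Unitization ℂ A) - rangeProj t b) := by
  have h : Commute (t w - rangeProj t a) (t w - rangeProj t b) :=
    ((Commute.refl _).sub_right (ht.commute_vertex_rangeProj hw b)).sub_left
      ((ht.commute_vertex_rangeProj hw a).symm.sub_right (ht.commute_rangeProj hFA a b))
  simpa only [Unitization.inrNonUnitalAlgHom_toFun, Unitization.inr_sub]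
    using h.map (Unitization.inrNonUnitalAlgHom ℂ A)

theorem commute_inr_vertex (ht : G.IsTCK σ t) {w : G.Path} (hw : G.IsVertex w) (a : G.Path) :
    Commute (t w : Unitization ℂ A) ((t w : Unitization ℂ A) - rangeProj t a) := by
  simpa only [Unitization.inrNonUnitalAlgHom_toFun, Unitization.inr_sub]
    using ((Commute.refl _).sub_right (ht.commute_vertex_rangeProj hw a)).map
      (Unitization.inrNonUnitalAlgHom ℂ A)

theorem isIdempotentElem_inr_vertex_sub_rangeProj (ht : G.IsTCK σ t) {w a : G.Path}
    (hw : G.IsVertex w) (h : G.r a = w) :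
    IsIdempotentElem ((t w : Unitization ℂ A) - rangeProj t a) := by
  rw [← Unitization.inr_sub, Unitization.isIdempotentElem_inr_iff]
  exact (ht.isIdempotentElem_rangeProj a).sub (ht.isIdempotentElem_vertex hw)
    (ht.rangeProj_mul_vertex hw h) (ht.vertex_mul_rangeProj h)

variable [IsScalarTower ℂ A A] [SMulCommClass ℂ A A]

theorem inr_Delta (ht : G.IsTCK σ t) (hFA : G.FinitelyAligned) {w : G.Path} (hw : G.IsVertex w)
    (F : Finset G.Path) :
    ((G.Delta t w F : A) : Unitization ℂ A) = (t w : Unitization ℂ A) *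
      F.noncommProd (fun l => (t w : Unitization ℂ A) - rangeProj t l)
        (Set.pairwise_of_forall _ _ (ht.commute_inr_vertex_sub_rangeProj hFA hw)) := by
  have hq : t w * star (t w) = t w := by
    rw [ht.star_vertex hw, (ht.isIdempotentElem_vertex hw).eq]
  have hpair : (F : Set G.Path).Pairwise (Function.onFun Commute
      fun l => ((t w * star (t w) - t l * star (t l) : A) : Unitization ℂ A)) :=
    fun a _ b _ _ => by
      simpa only [Function.onFun, hq, Unitization.inr_sub, rangeProj]
        using ht.commute_inr_vertex_sub_rangeProj hFA hw a b
  rw [Delta, dif_pos hpair]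
  simp only [hq, Unitization.inr_sub]
  refine Unitization.ext ?_ rfl
  simp

variable [StarModule ℂ A]

/-- Since `|c(μ, α)| = 1`, the cocycle cancels against its conjugate in
`q_{μα} = t_{μα} t_{μα}^*`. -/
theorem rangeProj_comp_mul (ht : G.IsTCK σ t) {μ α : G.Path} (h : G.s μ = G.r α) :
    rangeProj t (G.comp μ α) * t μ = t μ * rangeProj t α := by
  have hc : σ.c μ α * star (σ.c μ α) = 1 := by
    rw [Complex.star_def, Complex.mul_conj', σ.norm_one μ α h, Complex.ofReal_one, one_pow]
  have hq : rangeProj t (G.comp μ α) = t μ * rangeProj t α * star (t μ) := by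
    rw [rangeProj, rangeProj, ← one_smul ℂ (t (G.comp μ α) * _), ← hc, ← smul_mul_smul_comm,
      ← star_smul, ← ht.2.2.1 μ α h, star_mul]
    simp only [mul_assoc]
  rw [hq, mul_assoc, ht.2.2.2.1, mul_assoc, ht.rangeProj_mul_vertex (G.d_s μ) h.symm]

theorem rangeProj_mul_eq_mul_sum (ht : G.IsTCK σ t) {μ ν : G.Path} (X : Finset G.Path)
    (hX : (X : Set G.Path) = G.Ext μ {ν}) :
    rangeProj t ν * t μ = t μ * ∑ α ∈ X, rangeProj t α := by
  classical
  have hMCE : ((X.image (G.comp μ) : Finset G.Path) : Set G.Path) = G.MCE ν μ := by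
    rw [Finset.coe_image, hX, image_comp_Ext_singleton, MCE_comm]
  have hinj : Set.InjOn (G.comp μ) X := hX ▸ injOn_comp_Ext_singleton μ ν
  calc rangeProj t ν * t μ = rangeProj t ν * rangeProj t μ * t μ := by
        rw [mul_assoc, ht.rangeProj_mul]
    _ = ∑ α ∈ X, rangeProj t (G.comp μ α) * t μ := by
        rw [rangeProj, rangeProj, ht.2.2.2.2 ν μ _ hMCE, Finset.sum_image hinj, Finset.sum_mul]
        rfl
    _ = t μ * ∑ α ∈ X, rangeProj t α := by
        rw [Finset.mul_sum]
        refine Finset.sum_congr rfl fun α hα => ht.rangeProj_comp_mul ?_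
        exact (hX ▸ Finset.mem_coe.mpr hα : α ∈ G.Ext μ {ν}).1

theorem vertex_sub_rangeProj_mul (ht : G.IsTCK σ t) {v μ ν : G.Path} (hμ : G.r μ = v)
    (X : Finset G.Path) (hX : (X : Set G.Path) = G.Ext μ {ν}) :
    (t v - rangeProj t ν) * t μ = t μ * (t (G.s μ) - ∑ α ∈ X, rangeProj t α) := by
  rw [sub_mul, mul_sub, ← hμ, ht.r_mul, ht.mul_s, ht.rangeProj_mul_eq_mul_sum X hX]

theorem inr_vertex_sub_rangeProj_mul (ht : G.IsTCK σ t) (hFA : G.FinitelyAligned)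
    {v μ ν : G.Path} (hμ : G.r μ = v) {X : Finset G.Path} (hX : (X : Set G.Path) = G.Ext μ {ν}) :
    ((t v : Unitization ℂ A) - rangeProj t ν) * t μ = (t μ : Unitization ℂ A) *
      ((t (G.s μ) : Unitization ℂ A) *
        X.noncommProd (fun l => (t (G.s μ) : Unitization ℂ A) - rangeProj t l)
          (Set.pairwise_of_forall _ _ (ht.commute_inr_vertex_sub_rangeProj hFA (G.d_s μ)))) := by
  have hrX : ∀ α ∈ X, G.s μ = G.r α := fun α hα => (hX ▸ hα : α ∈ G.Ext μ {ν}).1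
  have horth : (X : Set G.Path).Pairwise
      fun α β => ((rangeProj t α : A) : Unitization ℂ A) * rangeProj t β = 0 := by
    rw [hX]
    intro α hα β hβ hne
    rw [← Unitization.inr_mul, ht.rangeProj_mul_rangeProj_eq_zero_of_mem_Ext_singleton hα hβ hne,
      Unitization.inr_zero]
  have key := congrArg (Unitization.inrNonUnitalAlgHom ℂ A) (ht.vertex_sub_rangeProj_mul hμ X hX)
  simp only [map_mul, map_sub, map_sum, Unitization.inrNonUnitalAlgHom_toFun] at key
  rw [Finset.mul_noncommProd_sub_eq_sub_sum (ht.commute_inr_vertex_sub_rangeProj hFA (G.d_s μ))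
    ((Unitization.isIdempotentElem_inr_iff ℂ).mpr (ht.isIdempotentElem_vertex (G.d_s μ))) X
    (fun α hα => by rw [← Unitization.inr_mul, ht.vertex_mul_rangeProj (hrX α hα).symm])
    (fun α hα => by rw [← Unitization.inr_mul, ht.rangeProj_mul_vertex (G.d_s μ) (hrX α hα).symm])
    horth, key]

end IsTCK

end KGraph

theorem stmt4_general {k : ℕ} (G : KGraph k) (hFA : G.FinitelyAligned) (σ : G.Cocycle)
    {A : Type*} [NonUnitalNormedRing A] [StarRing A]
    [NormedSpace ℂ A] [IsScalarTower ℂ A A] [SMulCommClass ℂ A A]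
    [StarModule ℂ A]
    (t : G.Path → A) (ht : G.IsTCK σ t)
    (v : G.Path) (hv : G.IsVertex v)
    (E : Finset G.Path)
    (μ : G.Path) (hμ : G.r μ = v)
    (Fext : Finset G.Path)
    (hFext : (Fext : Set G.Path) = G.Ext μ (E : Set G.Path)) :
    G.Delta t v E * t μ = t μ * G.Delta t (G.s μ) Fext := by
  classical
  have hsμ : G.IsVertex (G.s μ) := G.d_s μ
  obtain ⟨X, hX, hXunion⟩ := KGraph.exists_biUnion_eq_of_coe_eq_Ext hFext
  have hr : ∀ α ∈ E.biUnion X, G.r α = G.s μ := fun α hα =>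
    (hFext ▸ Finset.mem_coe.mpr (hXunion ▸ hα) : α ∈ G.Ext μ E).1.symm
  apply Unitization.inr_injective (R := ℂ)
  rw [Unitization.inr_mul, Unitization.inr_mul, ht.inr_Delta hFA hv, ht.inr_Delta hFA hsμ,
    ← hXunion]
  exact Finset.mul_noncommProd_mul_eq_mul_noncommProd_biUnion
    (ht.commute_inr_vertex_sub_rangeProj hFA hv) (ht.commute_inr_vertex_sub_rangeProj hFA hsμ) X E
    (fun ν _ => ht.commute_inr_vertex hv ν)
    (by rw [← Unitization.inr_mul, ← Unitization.inr_mul, ← hμ, ht.r_mul, ht.mul_s])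
    ((Unitization.isIdempotentElem_inr_iff ℂ).mpr (ht.isIdempotentElem_vertex hsμ))
    (fun α _ => ht.commute_inr_vertex hsμ α)
    (fun α hα => ht.isIdempotentElem_inr_vertex_sub_rangeProj hsμ (hr α hα))
    (fun ν hν => ht.inr_vertex_sub_rangeProj_mul hFA hμ (hX ν hν))

/-- `Δ(t)^E t_μ = t_μ Δ(t)^{Ext(μ;E)}`. -/
theorem stmt4 {k : ℕ} (G : KGraph k) (hFA : G.FinitelyAligned) (σ : G.Cocycle)
    {A : Type*} [NonUnitalNormedRing A] [StarRing A] [CStarRing A]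
    [NormedSpace ℂ A] [IsScalarTower ℂ A A] [SMulCommClass ℂ A A]
    [StarModule ℂ A] [CompleteSpace A]
    (t : G.Path → A) (ht : G.IsTCK σ t)
    (v : G.Path) (hv : G.IsVertex v)
    (E : Finset G.Path) (hEne : E.Nonempty) (hE : ∀ l ∈ E, G.r l = v)
    (μ : G.Path) (hμ : G.r μ = v)
    (Fext : Finset G.Path)
    (hFext : (Fext : Set G.Path) = G.Ext μ (E : Set G.Path)) :
    G.Delta t v E * t μ = t μ * G.Delta t (G.s μ) Fext :=
  stmt4_general G hFA σ t ht v hv E μ hμ Fext hFext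
end

section
/- Let Λ be a finitely aligned k-graph and c a T-valued 2-cocycle on Λ. There is a unique family {T_μ : μ ∈ Λ} of bounded linear operators on ℓ²(Λ) such that T_μ h_ν = c(μ,ν) h_{μν} whenever s(μ) = r(ν) and T_μ h_ν = 0 whenever s(μ) ≠ r(ν); moreover this family is a Toeplitz–Cuntz–Krieger (Λ,c)-family in the C*-algebra B(ℓ²(Λ)) of bounded operators on ℓ²(Λ). -/
open scoped BigOperators

/-!
For each `μ`, the vectors `c(μ,ν) h_{μν}` with `s(μ) = r(ν)` are orthonormal (left cancellation
in `Λ` and `|c| = 1`), so `T_μ` exists as a partial isometry, and it is unique since the `h_ν`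
span a dense subspace. Every relation is then checked on basis vectors: `T_μ T_μ^*` is the
projection onto the span of `{h_τ : τ ∈ μΛ}`, and (TCK4) is the fact, a consequence of the
factorisation property, that `μΛ ∩ νΛ` is the disjoint union of the sets `λΛ`, `λ ∈ MCE(μ,ν)`.
-/

namespace KGraph

variable {k : ℕ} (G : KGraph k)

/-- The set `μΛ`. -/
def extensions (μ : G.Path) : Set G.Path :=
  {τ | ∃ α, G.s μ = G.r α ∧ G.comp μ α = τ}

variable {G}

theorem comp_right_inj {μ α β : G.Path} (hα : G.s μ = G.r α) (hβ : G.s μ = G.r β) :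
    G.comp μ α = G.comp μ β ↔ α = β := by
  refine ⟨fun h => ?_, congrArg _⟩
  have hd : G.d α = G.d β :=
    add_left_cancel ((G.d_comp μ α hα).symm.trans (h ▸ G.d_comp μ β hβ))
  obtain ⟨p, -, hp⟩ := G.factor (G.comp μ α) (G.d μ) (G.d α) (G.d_comp μ α hα)
  exact congrArg Prod.snd ((hp (μ, α) ⟨rfl, rfl, hα, rfl⟩).trans
    (hp (μ, β) ⟨rfl, hd.symm, hβ, h.symm⟩).symm)

theorem d_le_of_mem_extensions {μ τ : G.Path} (h : τ ∈ G.extensions μ) : G.d μ ≤ G.d τ := by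
  obtain ⟨α, hα, rfl⟩ := h
  exact G.d_comp μ α hα ▸ le_self_add

theorem mem_extensions_trans {μ l τ : G.Path} (hl : l ∈ G.extensions μ)
    (hτ : τ ∈ G.extensions l) : τ ∈ G.extensions μ := by
  obtain ⟨α, hα, rfl⟩ := hl
  obtain ⟨η, hη, rfl⟩ := hτ
  rw [G.s_comp μ α hα] at hη
  exact ⟨G.comp α η, (G.r_comp α η hη).symm ▸ hα, (G.comp_assoc μ α η hα hη).symm⟩

theorem mem_extensions_of_isVertex_iff {v τ : G.Path} (hv : G.IsVertex v) :
    τ ∈ G.extensions v ↔ G.r τ = v := by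
  constructor
  · rintro ⟨α, hα, rfl⟩
    rw [G.r_comp v α hα, G.r_of_vertex v hv]
  · rintro rfl
    exact ⟨τ, G.s_of_vertex _ hv, G.id_comp τ⟩

theorem eq_of_mem_extensions_of_d_eq {l₁ l₂ τ : G.Path} (h₁ : τ ∈ G.extensions l₁)
    (h₂ : τ ∈ G.extensions l₂) (hd : G.d l₁ = G.d l₂) : l₁ = l₂ := by
  obtain ⟨η₁, hη₁, rfl⟩ := h₁
  obtain ⟨η₂, hη₂, hc⟩ := h₂
  have hdη : G.d η₂ = G.d η₁ := add_left_cancel (a := G.d l₂) <| by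
    rw [← G.d_comp _ _ hη₂, hc, G.d_comp _ _ hη₁, hd]
  obtain ⟨p, -, hp⟩ := G.factor (G.comp l₁ η₁) (G.d l₁) (G.d η₁) (G.d_comp _ _ hη₁)
  exact congrArg Prod.fst ((hp (l₁, η₁) ⟨rfl, rfl, hη₁, rfl⟩).trans
    (hp (l₂, η₂) ⟨hd.symm, hdη, hη₂, hc⟩).symm)

theorem exists_d_eq_mem_extensions {τ : G.Path} {m : Fin k → ℕ} (hm : m ≤ G.d τ) :
    ∃ l, G.d l = m ∧ τ ∈ G.extensions l := by
  obtain ⟨⟨l, η⟩, ⟨hl, -, hη, hc⟩, -⟩ := G.factor τ m (G.d τ - m) (add_tsub_cancel_of_le hm).symm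
  exact ⟨l, hl, η, hη, hc⟩

theorem mem_extensions_of_d_le {μ l τ : G.Path} (hμ : τ ∈ G.extensions μ)
    (hl : τ ∈ G.extensions l) (hd : G.d μ ≤ G.d l) : l ∈ G.extensions μ := by
  obtain ⟨ρ, hρ, hlρ⟩ := exists_d_eq_mem_extensions hd
  obtain ⟨δ, hδ, rfl⟩ := hlρ
  rw [eq_of_mem_extensions_of_d_eq hμ (mem_extensions_trans ⟨δ, hδ, rfl⟩ hl) hρ.symm]
  exact ⟨δ, hδ, rfl⟩

theorem exists_mem_MCE_mem_extensions {μ ν τ : G.Path} (hμ : τ ∈ G.extensions μ)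
    (hν : τ ∈ G.extensions ν) : ∃ l ∈ G.MCE μ ν, τ ∈ G.extensions l := by
  obtain ⟨l, hl, hτ⟩ :=
    exists_d_eq_mem_extensions (sup_le (d_le_of_mem_extensions hμ) (d_le_of_mem_extensions hν))
  exact ⟨l, ⟨hl, mem_extensions_of_d_le hμ hτ (hl ▸ le_sup_left),
    mem_extensions_of_d_le hν hτ (hl ▸ le_sup_right)⟩, hτ⟩

/-- The sets `lΛ`, `l ∈ MCE(μ, ν)`, partition `μΛ ∩ νΛ`. -/
theorem sum_MCE_ite_mem_extensions {M : Type*} [AddCommMonoid M] {μ ν : G.Path}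
    {F : Finset G.Path} (hF : (F : Set G.Path) = G.MCE μ ν) (τ : G.Path) (x : M)
    [Decidable (τ ∈ G.extensions μ ∧ τ ∈ G.extensions ν)] [∀ l, Decidable (τ ∈ G.extensions l)] :
    ∑ l ∈ F, (if τ ∈ G.extensions l then x else 0) =
      if τ ∈ G.extensions μ ∧ τ ∈ G.extensions ν then x else 0 := by
  have hMCE {l : G.Path} (hl : l ∈ F) : l ∈ G.MCE μ ν := hF ▸ Finset.mem_coe.mpr hl
  split_ifs with hτ
  · obtain ⟨l₀, hl₀, hτl₀⟩ := exists_mem_MCE_mem_extensions hτ.1 hτ.2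
    rw [Finset.sum_eq_single_of_mem l₀ (Finset.mem_coe.mp (hF ▸ hl₀)), if_pos hτl₀]
    intro l hl hne
    rw [if_neg]
    exact fun hτl => hne (eq_of_mem_extensions_of_d_eq hτl hτl₀ ((hMCE hl).1.trans hl₀.1.symm))
  · refine Finset.sum_eq_zero fun l hl => if_neg fun hτl => hτ ?_
    exact ⟨mem_extensions_trans (hMCE hl).2.1 hτl, mem_extensions_trans (hMCE hl).2.2 hτl⟩

end KGraph

open scoped lp InnerProductSpace ComplexConjugate

namespace lp

variable {ι : Type*} [DecidableEq ι]

theorem ext_clm_single_one {F : Type*} [AddCommMonoid F] [Module ℂ F] [TopologicalSpace F]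
    [T2Space F] {f g : ℓ²(ι, ℂ) →L[ℂ] F}
    (h : ∀ i, f (lp.single 2 i 1) = g (lp.single 2 i 1)) : f = g :=
  lp.ext_continuousLinearMap (by norm_num) fun i => ContinuousLinearMap.ext_ring (h i)

theorem apply_eq_inner_single_one (x : ℓ²(ι, ℂ)) (i : ι) :
    x i = ⟪lp.single 2 i (1 : ℂ), x⟫_ℂ := by
  simp [lp.inner_single_left]

theorem orthonormal_single_one : Orthonormal ℂ fun i : ι => (lp.single 2 i 1 : ℓ²(ι, ℂ)) := by
  rw [orthonormal_iff_ite]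
  intro i j
  simp [lp.inner_single_left, Pi.single_apply]

theorem inner_single_one_single_one (i j : ι) :
    ⟪(lp.single 2 i 1 : ℓ²(ι, ℂ)), lp.single 2 j 1⟫_ℂ = if i = j then 1 else 0 :=
  orthonormal_iff_ite.mp orthonormal_single_one i j

theorem adjoint_apply_apply {E : Type*} [NormedAddCommGroup E] [InnerProductSpace ℂ E]
    [CompleteSpace E] (A : ℓ²(ι, ℂ) →L[ℂ] E) (y : E) (i : ι) :
    A.adjoint y i = ⟪A (lp.single 2 i 1), y⟫_ℂ := by
  rw [apply_eq_inner_single_one, ContinuousLinearMap.adjoint_inner_right]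

/-- Restrict to `ℓ²({i // p i})`, then apply the isometry `ℓ²({i // p i}) → E` given by `v`. -/
theorem exists_clm_apply_single_one {E : Type*} [NormedAddCommGroup E] [InnerProductSpace ℂ E]
    [CompleteSpace E] {p : ι → Prop} [DecidablePred p] {v : {i // p i} → E}
    (hv : Orthonormal ℂ v) :
    ∃ T : ℓ²(ι, ℂ) →L[ℂ] E, ∀ i, T (lp.single 2 i 1) = if h : p i then v ⟨i, h⟩ else 0 := by
  let J := ((orthonormal_single_one (ι := ι)).comp ((↑) : {i // p i} → ι)
    Subtype.val_injective).orthogonalFamily.linearIsometry.toContinuousLinearMap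
  have hJ (y : ℓ²(ι, ℂ)) (i : {i // p i}) : J.adjoint y i = y i := by
    rw [adjoint_apply_apply]
    simp [J, apply_eq_inner_single_one y i]
  refine ⟨hv.orthogonalFamily.linearIsometry.toContinuousLinearMap ∘L J.adjoint, fun i => ?_⟩
  split_ifs with h
  · have : J.adjoint (lp.single 2 i 1) = lp.single 2 ⟨i, h⟩ 1 := by
      ext j
      simp [hJ, Pi.single_apply, Subtype.ext_iff]
    simp [this]
  · have : J.adjoint (lp.single 2 i 1) = 0 := by
      ext j
      have : j.1 ≠ i := by rintro rfl; exact h j.2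
      simp [hJ, this]
    simp [this]

end lp

namespace KGraph

open scoped Classical

variable {k : ℕ} {G : KGraph k}

theorem Cocycle.mul_conj_self (σ : G.Cocycle) {μ ν : G.Path} (h : G.s μ = G.r ν) :
    σ.c μ ν * conj (σ.c μ ν) = 1 := by
  rw [Complex.mul_conj', σ.norm_one μ ν h]
  norm_num

variable (G) in
/-- The path-space representation of `(Λ, c)` on `ℓ²(Λ)`. -/
def IsPathRep (σ : G.Cocycle) (T : G.Path → (ℓ²(G.Path, ℂ) →L[ℂ] ℓ²(G.Path, ℂ))) : Prop :=
  ∀ μ ν : G.Path,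
    (G.s μ = G.r ν → T μ (lp.single 2 ν 1) = σ.c μ ν • lp.single 2 (G.comp μ ν) 1) ∧
    (G.s μ ≠ G.r ν → T μ (lp.single 2 ν 1) = 0)

theorem exists_isPathRep (σ : G.Cocycle) : ∃ T, G.IsPathRep σ T := by
  have hv (μ : G.Path) : Orthonormal ℂ fun ν : {ν // G.s μ = G.r ν} =>
      σ.c μ ν • (lp.single 2 (G.comp μ ν) 1 : ℓ²(G.Path, ℂ)) := by
    rw [orthonormal_iff_ite]
    rintro ⟨α, hα⟩ ⟨β, hβ⟩
    simp only [inner_smul_left, inner_smul_right, lp.inner_single_one_single_one,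
      comp_right_inj hα hβ, Subtype.mk.injEq]
    split_ifs with hαβ
    · subst hαβ
      rw [mul_one, σ.mul_conj_self hα]
    · rw [mul_zero, mul_zero]
  choose T hT using fun μ => lp.exists_clm_apply_single_one (hv μ)
  exact ⟨T, fun μ ν => ⟨fun h => by simp [hT, h], fun h => by simp [hT, h]⟩⟩

section

variable {σ : G.Cocycle} {T : G.Path → (ℓ²(G.Path, ℂ) →L[ℂ] ℓ²(G.Path, ℂ))}

theorem IsPathRep.unique {T' : G.Path → (ℓ²(G.Path, ℂ) →L[ℂ] ℓ²(G.Path, ℂ))}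
    (hT : G.IsPathRep σ T) (hT' : G.IsPathRep σ T') : T = T' := by
  funext μ
  refine lp.ext_clm_single_one fun ν => ?_
  by_cases h : G.s μ = G.r ν
  · rw [(hT μ ν).1 h, (hT' μ ν).1 h]
  · rw [(hT μ ν).2 h, (hT' μ ν).2 h]

theorem IsPathRep.apply_single_of_isVertex (hT : G.IsPathRep σ T) {v : G.Path}
    (hv : G.IsVertex v) (τ : G.Path) :
    T v (lp.single 2 τ 1) = if G.r τ = v then lp.single 2 τ 1 else 0 := by
  have hs : G.s v = v := G.s_of_vertex v hv
  split_ifs with hτ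
  · subst hτ
    rw [(hT _ τ).1 hs, G.id_comp, σ.left_id, one_smul]
  · exact (hT v τ).2 (by rw [hs]; exact Ne.symm hτ)

theorem IsPathRep.mul_eq (hT : G.IsPathRep σ T) {μ ν : G.Path} (h : G.s μ = G.r ν) :
    T μ * T ν = σ.c μ ν • T (G.comp μ ν) := by
  refine lp.ext_clm_single_one fun τ => ?_
  rw [mul_apply_eq_comp, smul_apply]
  by_cases hτ : G.s ν = G.r τ
  · rw [(hT ν τ).1 hτ, map_smul, (hT μ _).1 (h.trans (G.r_comp ν τ hτ).symm),
      (hT _ τ).1 ((G.s_comp μ ν h).trans hτ), smul_smul, smul_smul, G.comp_assoc μ ν τ h hτ,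
      σ.cocycle μ ν τ h hτ]
  · rw [(hT ν τ).2 hτ, map_zero, (hT _ τ).2 ((G.s_comp μ ν h).trans_ne hτ), smul_zero]

theorem IsPathRep.star_apply_single_comp (hT : G.IsPathRep σ T) {l ν : G.Path}
    (h : G.s l = G.r ν) :
    star (T l) (lp.single 2 (G.comp l ν) 1) = conj (σ.c l ν) • lp.single 2 ν 1 := by
  ext τ
  rw [ContinuousLinearMap.star_eq_adjoint, lp.adjoint_apply_apply]
  by_cases hτ : G.s l = G.r τ
  · rw [(hT l τ).1 hτ, inner_smul_left, lp.inner_single_one_single_one]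
    by_cases hτν : τ = ν
    · subst hτν
      simp
    · simp [comp_right_inj hτ h, hτν]
  · have hτν : τ ≠ ν := by rintro rfl; exact hτ h
    simp [(hT l τ).2 hτ, hτν]

theorem IsPathRep.star_apply_single_of_notMem (hT : G.IsPathRep σ T) {l τ : G.Path}
    (h : τ ∉ G.extensions l) : star (T l) (lp.single 2 τ 1) = 0 := by
  ext ν
  rw [ContinuousLinearMap.star_eq_adjoint, lp.adjoint_apply_apply]
  by_cases hν : G.s l = G.r ν
  · have hne : G.comp l ν ≠ τ := fun hc => h ⟨ν, hν, hc⟩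
    simp [(hT l ν).1 hν, lp.inner_single_one_single_one, hne]
  · simp [(hT l ν).2 hν]

theorem IsPathRep.mul_star_apply_single (hT : G.IsPathRep σ T) (μ τ : G.Path) :
    (T μ * star (T μ)) (lp.single 2 τ 1) =
      if τ ∈ G.extensions μ then lp.single 2 τ 1 else 0 := by
  rw [mul_apply_eq_comp]
  split_ifs with h
  · obtain ⟨ν, hν, rfl⟩ := h
    rw [hT.star_apply_single_comp hν, map_smul, (hT μ ν).1 hν, smul_smul,
      mul_comm, σ.mul_conj_self hν, one_smul]
  · rw [hT.star_apply_single_of_notMem h, map_zero]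

theorem IsPathRep.star_mul_self (hT : G.IsPathRep σ T) (l : G.Path) :
    star (T l) * T l = T (G.s l) := by
  refine lp.ext_clm_single_one fun ν => ?_
  rw [mul_apply_eq_comp, hT.apply_single_of_isVertex (G.d_s l)]
  by_cases h : G.s l = G.r ν
  · rw [(hT l ν).1 h, map_smul, hT.star_apply_single_comp h, smul_smul,
      σ.mul_conj_self h, one_smul, if_pos h.symm]
  · rw [(hT l ν).2 h, map_zero, if_neg (Ne.symm h)]

theorem IsPathRep.isSelfAdjoint_of_isVertex (hT : G.IsPathRep σ T) {v : G.Path}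
    (hv : G.IsVertex v) : IsSelfAdjoint (T v) := by
  have hq : T v = T v * star (T v) := lp.ext_clm_single_one fun τ => by
    rw [hT.apply_single_of_isVertex hv, hT.mul_star_apply_single,
      mem_extensions_of_isVertex_iff hv]
  rw [hq]
  exact IsSelfAdjoint.mul_star_self _

theorem IsPathRep.mul_self_of_isVertex (hT : G.IsPathRep σ T) {v : G.Path}
    (hv : G.IsVertex v) : T v * T v = T v := by
  have hs : G.s v = v := G.s_of_vertex v hv
  have hvv : G.comp v v = v := by simpa only [hs] using G.comp_id v
  have hc : σ.c v v = 1 := by simpa only [hs] using σ.right_id v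
  rw [hT.mul_eq (hs.trans (G.r_of_vertex v hv).symm), hvv, hc, one_smul]

theorem IsPathRep.mul_eq_zero_of_isVertex (hT : G.IsPathRep σ T) {v w : G.Path}
    (hv : G.IsVertex v) (hw : G.IsVertex w) (hvw : v ≠ w) : T v * T w = 0 := by
  refine lp.ext_clm_single_one fun τ => ?_
  rw [mul_apply_eq_comp, hT.apply_single_of_isVertex hw, zero_apply]
  split_ifs with hτ
  · rw [hT.apply_single_of_isVertex hv, if_neg fun hτv => hvw (hτv.symm.trans hτ)]
  · rw [map_zero]

theorem IsPathRep.mul_star_mul_mul_star (hT : G.IsPathRep σ T) {μ ν : G.Path}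
    {F : Finset G.Path} (hF : (F : Set G.Path) = G.MCE μ ν) :
    T μ * star (T μ) * (T ν * star (T ν)) = ∑ l ∈ F, T l * star (T l) := by
  refine lp.ext_clm_single_one fun τ => ?_
  rw [mul_apply_eq_comp, hT.mul_star_apply_single ν, sum_apply]
  simp only [hT.mul_star_apply_single, sum_MCE_ite_mem_extensions hF]
  by_cases hν : τ ∈ G.extensions ν
  · simp only [hν, if_true, and_true, hT.mul_star_apply_single]
  · simp only [hν, if_false, and_false, map_zero]

theorem IsPathRep.isTCK (hT : G.IsPathRep σ T) : G.IsTCK σ T :=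
  ⟨fun _ hv => ⟨(hT.isSelfAdjoint_of_isVertex hv).star_eq, hT.mul_self_of_isVertex hv⟩,
    fun _ _ hv hw hvw => hT.mul_eq_zero_of_isVertex hv hw hvw, fun _ _ h => hT.mul_eq h,
    hT.star_mul_self, fun _ _ _ hF => hT.mul_star_mul_mul_star hF⟩

end

end KGraph

open scoped Classical in
theorem stmt5_general {k : ℕ} (G : KGraph k) (σ : G.Cocycle) :
    (∃! T : G.Path → (lp (fun _ : G.Path => ℂ) 2 →L[ℂ] lp (fun _ : G.Path => ℂ) 2),
      ∀ μ ν : G.Path,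
        (G.s μ = G.r ν → T μ (lp.single 2 ν 1) = σ.c μ ν • lp.single 2 (G.comp μ ν) 1) ∧
        (G.s μ ≠ G.r ν → T μ (lp.single 2 ν 1) = 0)) ∧
    (∀ T : G.Path → (lp (fun _ : G.Path => ℂ) 2 →L[ℂ] lp (fun _ : G.Path => ℂ) 2),
      (∀ μ ν : G.Path,
        (G.s μ = G.r ν → T μ (lp.single 2 ν 1) = σ.c μ ν • lp.single 2 (G.comp μ ν) 1) ∧
        (G.s μ ≠ G.r ν → T μ (lp.single 2 ν 1) = 0)) →
      G.IsTCK σ T) := by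
  obtain ⟨T, hT⟩ := KGraph.exists_isPathRep σ
  exact ⟨⟨T, hT, fun _ hT' => KGraph.IsPathRep.unique hT' hT⟩,
    fun _ hT' => KGraph.IsPathRep.isTCK hT'⟩

open scoped Classical in
theorem stmt5 {k : ℕ} (G : KGraph k) (hFA : G.FinitelyAligned) (σ : G.Cocycle) :
    (∃! T : G.Path → (lp (fun _ : G.Path => ℂ) 2 →L[ℂ] lp (fun _ : G.Path => ℂ) 2),
      ∀ μ ν : G.Path,
        (G.s μ = G.r ν → T μ (lp.single 2 ν 1) = σ.c μ ν • lp.single 2 (G.comp μ ν) 1) ∧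
        (G.s μ ≠ G.r ν → T μ (lp.single 2 ν 1) = 0)) ∧
    (∀ T : G.Path → (lp (fun _ : G.Path => ℂ) 2 →L[ℂ] lp (fun _ : G.Path => ℂ) 2),
      (∀ μ ν : G.Path,
        (G.s μ = G.r ν → T μ (lp.single 2 ν 1) = σ.c μ ν • lp.single 2 (G.comp μ ν) 1) ∧
        (G.s μ ≠ G.r ν → T μ (lp.single 2 ν 1) = 0)) →
      G.IsTCK σ T) :=
  stmt5_general G σ
end

section
/- Let A and B be C*-algebras, let Φ : A → A be a faithful conditional expectation, and let π : A → B be a *-homomorphism. Suppose there is a linear map Ψ : B → B such that Ψ ∘ π = π ∘ Φ. Then π is injective if and only if the restriction of π to the range Φ(A) is injective. -/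
open scoped BigOperators

section IntertwiningExpectation

variable {F A B : Type*} [NonUnitalRing A] [StarRing A] [NonUnitalRing B] [StarRing B]
  [FunLike F A B] [NonUnitalRingHomClass F A B] [StarHomClass F A B]

/-- Since `Ψ ∘ π = π ∘ Φ`, the element `π (Φ (a⋆ * a))` depends only on `π a`. -/
theorem injective_of_injOn_range_of_faithful (π : F) {Φ : A → A} {Ψ : B → B} (hΦ : Φ 0 = 0)
    (hfaithful : ∀ a, Φ (star a * a) = 0 → a = 0) (hcomm : ∀ a, Ψ (π a) = π (Φ a))
    (hinj : Set.InjOn π (Set.range Φ)) : Function.Injective π := by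
  refine (injective_iff_map_eq_zero π).2 fun a ha => hfaithful a ?_
  have hsame : π (Φ (star a * a)) = π (Φ 0) := by
    rw [← hcomm, ← hcomm, map_mul, map_star, ha, mul_zero, map_zero]
  rw [hinj ⟨_, rfl⟩ ⟨0, rfl⟩ hsame, hΦ]

end IntertwiningExpectation

theorem stmt6_general {A B : Type*}
    [NonUnitalNormedRing A] [StarRing A] [NormedSpace ℂ A]
    [NonUnitalNormedRing B] [StarRing B] [NormedSpace ℂ B]
    (Φ : A →L[ℂ] A)
    (hfaithful : ∀ a : A, Φ (star a * a) = 0 → a = 0)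
    (π : A →⋆ₙₐ[ℂ] B) (Ψ : B →ₗ[ℂ] B)
    (hcomm : ∀ a : A, Ψ (π a) = π (Φ a)) :
    Function.Injective π ↔ Set.InjOn π (Set.range Φ) :=
  ⟨fun h => h.injOn, injective_of_injOn_range_of_faithful π (map_zero Φ) hfaithful hcomm⟩

/-- a homomorphism intertwining a faithful conditional expectation is
injective iff it is injective on the range of the expectation. -/
theorem stmt6 {A B : Type*}
    [NonUnitalNormedRing A] [StarRing A] [CStarRing A] [NormedSpace ℂ A]
    [IsScalarTower ℂ A A] [SMulCommClass ℂ A A] [StarModule ℂ A] [CompleteSpace A]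
    [NonUnitalNormedRing B] [StarRing B] [CStarRing B] [NormedSpace ℂ B]
    [IsScalarTower ℂ B B] [SMulCommClass ℂ B B] [StarModule ℂ B] [CompleteSpace B]
    (Φ : A →L[ℂ] A)
    (hidem : ∀ a : A, Φ (Φ a) = Φ a)
    (hrange_closed : IsClosed (Set.range Φ))
    (hrange_mul : ∀ x ∈ Set.range Φ, ∀ y ∈ Set.range Φ, x * y ∈ Set.range Φ)
    (hrange_star : ∀ x ∈ Set.range Φ, star x ∈ Set.range Φ)
    (hfaithful : ∀ a : A, Φ (star a * a) = 0 → a = 0)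
    (π : A →⋆ₙₐ[ℂ] B) (Ψ : B →ₗ[ℂ] B)
    (hcomm : ∀ a : A, Ψ (π a) = π (Φ a)) :
    Function.Injective π ↔ Set.InjOn π (Set.range Φ) :=
  stmt6_general Φ hfaithful π Ψ hcomm
end

section
/- Let Λ be a finitely aligned k-graph, let Ε ⊆ FE(Λ) be satiated, and let H ⊆ Λ^0 be hereditary and Ε-saturated. Then Ε_H := {E \ EH : E ∈ Ε, r(E) ∉ H} is a subset of FE(Λ \ ΛH): for every E ∈ Ε with r(E) ∉ H, the set E \ EH is nonempty, finite, disjoint from Λ^0, contained in r(E)(Λ \ ΛH), and exhaustive in Λ \ ΛH, i.e. for every λ ∈ r(E)Λ with s(λ) ∉ H there exists μ ∈ E \ EH such that MCE(μ,λ) ∩ (Λ \ ΛH) ≠ ∅. -/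
open scoped BigOperators

/-!
Saturation of `H` forces some path of `E` to have its source outside `H`. For exhaustiveness,
take `λ` with `s(λ) ∉ H`. Either `λ` extends some `μ ∈ E`, and then `λ` itself is a common
extension of `λ` and `μ`, with `s(μ) ∉ H` by heredity; or it does not, and then `Ext(λ; E) ∈ Ε`
by (S2), so saturation gives `α ∈ Ext(λ; E)` with `s(α) ∉ H`, and `λα ∈ MCE(λ, ν)` for some
`ν ∈ E`, again with `s(ν) ∉ H` by heredity.
-/

namespace KGraph

variable {k : ℕ} {G : KGraph k}

def IsHereditary (G : KGraph k) (H : Set G.Path) : Prop :=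
  ∀ l, G.r l ∈ H → G.s l ∈ H

def IsSaturated (G : KGraph k) (Ε : Set (Set G.Path)) (H : Set G.Path) : Prop :=
  ∀ E ∈ Ε, ∀ v, G.IsVertex v → (∀ μ ∈ E, G.r μ = v) → (∀ μ ∈ E, G.s μ ∈ H) → v ∈ H

theorem comp_mem_MCE_comp_left {μ μ' : G.Path} (h : G.s μ = G.r μ') :
    G.comp μ μ' ∈ G.MCE (G.comp μ μ') μ := by
  refine ⟨?_, ⟨G.s (G.comp μ μ'), ?_, G.comp_id _⟩, ⟨μ', h, rfl⟩⟩
  · rw [G.d_comp μ μ' h]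
    exact (sup_eq_left.mpr le_self_add).symm
  · exact (G.r_of_vertex _ (G.d_s _)).symm

theorem IsHereditary.s_comp_mem {H : Set G.Path} (hH : G.IsHereditary H) {μ ν : G.Path}
    (h : G.s μ = G.r ν) (hμ : G.s μ ∈ H) : G.s (G.comp μ ν) ∈ H := by
  rw [G.s_comp μ ν h]
  exact hH ν (h ▸ hμ)

theorem IsSaturated.exists_s_not_mem {Ε : Set (Set G.Path)} {H : Set G.Path}
    (hH : G.IsSaturated Ε H) {E : Set G.Path} (hE : E ∈ Ε) {v : G.Path} (hv : G.IsVertex v)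
    (hr : ∀ μ ∈ E, G.r μ = v) (hvH : v ∉ H) : ∃ μ ∈ E, G.s μ ∉ H := by
  by_contra! h
  exact hvH (hH E hE v hv hr h)

theorem Satiated.ext_mem {Ε : Set (Set G.Path)} (hΕ : G.Satiated Ε) {E : Set G.Path}
    (hE : E ∈ Ε) {v : G.Path} (hv : G.IsVertex v) (hr : ∀ μ ∈ E, G.r μ = v) {l : G.Path}
    (hl : G.r l = v) (hlE : ¬ ∃ μ ∈ E, ∃ μ', G.s μ = G.r μ' ∧ G.comp μ μ' = l) :
    G.ExtIn Set.univ l E ∈ Ε :=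
  (hΕ.2 E hE v hv hr).2.1 l (Set.mem_univ l) hl hlE

theorem exhaustiveIn_sep_s_not_mem {Ε : Set (Set G.Path)} (hΕ : G.Satiated Ε)
    {H : Set G.Path} (hHher : G.IsHereditary H) (hHsat : G.IsSaturated Ε H)
    {E : Set G.Path} (hE : E ∈ Ε) {v : G.Path} (hv : G.IsVertex v) (hr : ∀ μ ∈ E, G.r μ = v) :
    G.ExhaustiveIn {l | G.s l ∉ H} v {μ ∈ E | G.s μ ∉ H} := by
  intro l hl hrl
  by_cases hlE : ∃ μ ∈ E, ∃ μ', G.s μ = G.r μ' ∧ G.comp μ μ' = l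
  · obtain ⟨μ, hμE, μ', hμμ', rfl⟩ := hlE
    exact ⟨μ, ⟨hμE, fun hμ => hl (hHher.s_comp_mem hμμ' hμ)⟩, _,
      comp_mem_MCE_comp_left hμμ', hl⟩
  · have hExt := hΕ.ext_mem hE hv hr hrl hlE
    obtain ⟨α, ⟨hlα, ν, hνE, hMCE, -⟩, hα⟩ :=
      hHsat.exists_s_not_mem hExt (G.d_s l) (fun α hα => hα.1.symm) hl
    have hsα : G.s (G.comp l α) ∉ H := by rwa [G.s_comp l α hlα]
    obtain ⟨β, hνβ, hβ⟩ := hMCE.2.2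
    refine ⟨ν, ⟨hνE, fun hν => hsα ?_⟩, _, hMCE, hsα⟩
    rw [← hβ]
    exact hHher.s_comp_mem hνβ hν

end KGraph

theorem stmt8_general {k : ℕ} (G : KGraph k)
    (Ε : Set (Set G.Path)) (hΕ : G.Satiated Ε)
    (H : Set G.Path)
    (hHher : ∀ l : G.Path, G.r l ∈ H → G.s l ∈ H)
    (hHsat : ∀ E ∈ Ε, ∀ v : G.Path, G.IsVertex v → (∀ μ ∈ E, G.r μ = v) →
      (∀ μ ∈ E, G.s μ ∈ H) → v ∈ H) :
    ∀ E ∈ Ε, ∀ v : G.Path, G.IsVertex v → (∀ μ ∈ E, G.r μ = v) → v ∉ H →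
      ({μ ∈ E | G.s μ ∉ H} : Set G.Path).Nonempty ∧
      ({μ ∈ E | G.s μ ∉ H} : Set G.Path).Finite ∧
      (∀ μ ∈ ({μ ∈ E | G.s μ ∉ H} : Set G.Path),
        ¬ G.IsVertex μ ∧ G.r μ = v ∧ G.s μ ∉ H) ∧
      G.ExhaustiveIn {l | G.s l ∉ H} v {μ ∈ E | G.s μ ∉ H} := by
  intro E hE v hv hr hvH
  obtain ⟨hEfin, -, hEnv, -⟩ := hΕ.1 E hE
  obtain ⟨μ, hμE, hμ⟩ := KGraph.IsSaturated.exists_s_not_mem hHsat hE hv hr hvH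
  exact ⟨⟨μ, hμE, hμ⟩, hEfin.subset (fun _ hμ => hμ.1),
    fun μ hμ => ⟨hEnv μ hμ.1, hr μ hμ.1, hμ.2⟩,
    KGraph.exhaustiveIn_sep_s_not_mem hΕ hHher hHsat hE hv hr⟩

/-- for hereditary `Ε`-saturated `H`, each `E \\ EH` (for `E ∈ Ε` with
`r(E) ∉ H`) is a finite exhaustive set of the `k`-graph `Λ \\ ΛH`. -/
theorem stmt8 {k : ℕ} (G : KGraph k) (hFA : G.FinitelyAligned)
    (Ε : Set (Set G.Path)) (hΕ : G.Satiated Ε)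
    (H : Set G.Path) (hHv : ∀ v ∈ H, G.IsVertex v)
    (hHher : ∀ l : G.Path, G.r l ∈ H → G.s l ∈ H)
    (hHsat : ∀ E ∈ Ε, ∀ v : G.Path, G.IsVertex v → (∀ μ ∈ E, G.r μ = v) →
      (∀ μ ∈ E, G.s μ ∈ H) → v ∈ H) :
    ∀ E ∈ Ε, ∀ v : G.Path, G.IsVertex v → (∀ μ ∈ E, G.r μ = v) → v ∉ H →
      ({μ ∈ E | G.s μ ∉ H} : Set G.Path).Nonempty ∧
      ({μ ∈ E | G.s μ ∉ H} : Set G.Path).Finite ∧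
      (∀ μ ∈ ({μ ∈ E | G.s μ ∉ H} : Set G.Path),
        ¬ G.IsVertex μ ∧ G.r μ = v ∧ G.s μ ∉ H) ∧
      G.ExhaustiveIn {l | G.s l ∉ H} v {μ ∈ E | G.s μ ∉ H} :=
  stmt8_general G Ε hΕ H hHher hHsat
end
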